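/- Let AF = ⟨AR, attacks⟩ be a finite argumentation framework. A set M ⊆ { d(a) | a ∈ AR } is a model of β'(AF), where β'(AF) is β(AF) with every atom a replaced by ¬d(a), if and only if { a ∈ AR | d(a) ∉ M } is an admissible set of AF. -/
import Mathlib


inductive PForm (α : Type) where
  | atom : α → PForm α
  | tru : PForm α
  | fls : PForm α
  | neg : PForm α → PForm α
  | conj : PForm α → PForm α → PForm α
  | disj : PForm α → PForm α → PForm α
  | impl : PForm α → PForm α → PForm α
deriving DecidableEq

def PForm.eval {α : Type} (M : Set α) : PForm α → Prop
  | .atom a => a ∈ M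
  | .tru => True
  | .fls => False
  | .neg φ => ¬ PForm.eval M φ
  | .conj φ ψ => PForm.eval M φ ∧ PForm.eval M ψ
  | .disj φ ψ => PForm.eval M φ ∨ PForm.eval M ψ
  | .impl φ ψ => PForm.eval M φ → PForm.eval M ψ

def PForm.subst {α β : Type} (σ : α → PForm β) : PForm α → PForm β
  | .atom a => σ a
  | .tru => .tru
  | .fls => .fls
  | .neg φ => .neg (PForm.subst σ φ)
  | .conj φ ψ => .conj (PForm.subst σ φ) (PForm.subst σ ψ)
  | .disj φ ψ => .disj (PForm.subst σ φ) (PForm.subst σ ψ)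
  | .impl φ ψ => .impl (PForm.subst σ φ) (PForm.subst σ ψ)

def ModelOf {α : Type} (M : Set α) (T : Set (PForm α)) : Prop := ∀ φ ∈ T, PForm.eval M φ

def MinimalModel {α : Type} (M : Set α) (T : Set (PForm α)) : Prop :=
  ModelOf M T ∧ ∀ M', ModelOf M' T → M' ⊆ M → M' = M

def MaximalModel {α : Type} (M : Set α) (T : Set (PForm α)) : Prop :=
  ModelOf M T ∧ ∀ M', ModelOf M' T → M ⊆ M' → M' = M

noncomputable def bigConj {ι α : Type} (s : Finset ι) (f : ι → PForm α) : PForm α :=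
  (s.toList.map f).foldr PForm.conj PForm.tru

noncomputable def bigDisj {ι α : Type} (s : Finset ι) (f : ι → PForm α) : PForm α :=
  (s.toList.map f).foldr PForm.disj PForm.fls

def attackers {α : Type} [DecidableEq α] (att : Finset (α × α)) (a : α) : Finset α :=
  (att.filter (fun p => p.2 = a)).image Prod.fst

def conflictFree {α : Type} (att : Finset (α × α)) (S : Set α) : Prop :=
  ∀ a ∈ S, ∀ b ∈ S, (a, b) ∉ att

def acceptable {α : Type} (att : Finset (α × α)) (S : Set α) (a : α) : Prop :=
  ∀ b, (b, a) ∈ att → ∃ c ∈ S, (c, b) ∈ att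

def admissible {α : Type} (att : Finset (α × α)) (S : Set α) : Prop :=
  conflictFree att S ∧ ∀ a ∈ S, acceptable att S a

def preferredExt {α : Type} (att : Finset (α × α)) (S : Set α) : Prop :=
  admissible att S ∧ ∀ S', admissible att S' → S ⊆ S' → S' = S

noncomputable def alphaTheory {α : Type} [DecidableEq α] (att : Finset (α × α)) : Set (PForm α) :=
  { φ | ∃ p ∈ att, φ = PForm.impl (PForm.neg (PForm.atom p.1)) (PForm.atom p.2) } ∪
  { φ | ∃ p ∈ att, φ = PForm.impl (bigConj (attackers att p.1) PForm.atom) (PForm.atom p.2) }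

noncomputable def betaTheory {α : Type} [DecidableEq α] (att : Finset (α × α)) : Set (PForm α) :=
  { φ | ∃ p ∈ att, φ = PForm.impl (PForm.atom p.2) (PForm.neg (PForm.atom p.1)) } ∪
  { φ | ∃ p ∈ att, φ = PForm.impl (PForm.atom p.2) (bigDisj (attackers att p.1) PForm.atom) }


lemma eval_subst_neg {α : Type} (M : Set α) (φ : PForm α) :
    PForm.eval M (PForm.subst (fun a => PForm.neg (PForm.atom a)) φ) ↔ PForm.eval Mᶜ φ := by
  induction φ with
  | atom a => simp [PForm.subst, PForm.eval]
  | tru => simp [PForm.subst, PForm.eval]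
  | fls => simp [PForm.subst, PForm.eval]
  | neg φ ih => simp [PForm.subst, PForm.eval, ih]
  | conj φ ψ ih1 ih2 => simp [PForm.subst, PForm.eval, ih1, ih2]
  | disj φ ψ ih1 ih2 => simp [PForm.subst, PForm.eval, ih1, ih2]
  | impl φ ψ ih1 ih2 => simp [PForm.subst, PForm.eval, ih1, ih2]

lemma eval_foldr_disj {α : Type} (S : Set α) (l : List (PForm α)) :
    PForm.eval S (l.foldr PForm.disj PForm.fls) ↔ ∃ φ ∈ l, PForm.eval S φ := by
  induction l with
  | nil => simp [PForm.eval]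
  | cons h t ih => simp [PForm.eval, ih]

lemma eval_bigDisj {ι α : Type} (S : Set α) (s : Finset ι) (f : ι → PForm α) :
    PForm.eval S (bigDisj s f) ↔ ∃ i ∈ s, PForm.eval S (f i) := by
  unfold bigDisj
  rw [eval_foldr_disj]
  constructor
  · rintro ⟨φ, hφ, h⟩
    rcases List.mem_map.1 hφ with ⟨i, hi, rfl⟩
    exact ⟨i, Finset.mem_toList.1 hi, h⟩
  · rintro ⟨i, hi, h⟩
    exact ⟨f i, List.mem_map.2 ⟨i, Finset.mem_toList.2 hi, rfl⟩, h⟩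

lemma mem_attackers {α : Type} [DecidableEq α] (att : Finset (α × α)) (a c : α) :
    c ∈ attackers att a ↔ (c, a) ∈ att := by
  unfold attackers
  simp only [Finset.mem_image, Finset.mem_filter]
  constructor
  · rintro ⟨⟨x, y⟩, ⟨hm, rfl⟩, rfl⟩; exact hm
  · intro h; exact ⟨(c, a), ⟨h, rfl⟩, rfl⟩

lemma modelOf_beta_iff {α : Type} [DecidableEq α] (att : Finset (α × α)) (S : Set α) :
    ModelOf S (betaTheory att) ↔ admissible att S := by
  constructor
  · intro h
    constructor
    · intro a ha b hb hab
      have h1 := h (PForm.impl (PForm.atom b) (PForm.neg (PForm.atom a)))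
        (Or.inl ⟨(a, b), hab, rfl⟩)
      exact h1 hb ha
    · intro a ha b hba
      have h2 := h (PForm.impl (PForm.atom a) (bigDisj (attackers att b) PForm.atom))
        (Or.inr ⟨(b, a), hba, rfl⟩)
      have := (eval_bigDisj S (attackers att b) PForm.atom).1 (h2 ha)
      rcases this with ⟨c, hc, hcS⟩
      exact ⟨c, hcS, (mem_attackers att b c).1 hc⟩
  · rintro ⟨hcf, hacc⟩ φ hφ
    rcases hφ with ⟨p, hp, rfl⟩ | ⟨p, hp, rfl⟩
    · intro h2 h1
      exact hcf p.1 h1 p.2 h2 hp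
    · intro h2
      rcases hacc p.2 h2 p.1 hp with ⟨c, hcS, hc⟩
      exact (eval_bigDisj S (attackers att p.1) PForm.atom).2
        ⟨c, (mem_attackers att p.1 c).2 hc, hcS⟩

theorem stmt13 {α : Type} [DecidableEq α] [Fintype α] (att : Finset (α × α)) (M : Set α) :
    ModelOf M ((PForm.subst (fun a => PForm.neg (PForm.atom a))) '' betaTheory att) ↔
      admissible att Mᶜ := by
  have : ModelOf M ((PForm.subst (fun a => PForm.neg (PForm.atom a))) '' betaTheory att) ↔
      ModelOf Mᶜ (betaTheory att) := by
    constructor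
    · intro h φ hφ
      exact (eval_subst_neg M φ).1 (h _ ⟨φ, hφ, rfl⟩)
    · rintro h ψ ⟨φ, hφ, rfl⟩
      exact (eval_subst_neg M φ).2 (h φ hφ)
  rw [this, modelOf_beta_iff]
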